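/- Define f₁(u) := ∫₀¹ u^{-p-1}(1-u)^{p-1} · sin(πp)/(πp) dp for u ∈ (0,1). Then f₁(u) ~ -1/((1-u)·log(1-u)) as u → 1⁻; that is, lim_{u→1⁻} f₁(u)·(1-u)·log(1-u) = -1. -/

import Mathlib

open Real

/-- `f₁(u) = ∫₀¹ u^{-p-1}(1-u)^{p-1} sin(πp)/(πp) dp`. -/
noncomputable def f1 (u : ℝ) : ℝ :=
  ∫ p in (0:ℝ)..1, u ^ (-p - 1) * (1 - u) ^ (p - 1) * (Real.sin (π * p) / (π * p))

/-! With `L = log (1 - u)` we have `f₁(u) (1 - u) = ∫₀¹ u^{-p-1} e^{Lp} sinc(πp) dp`. As `L → -∞`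
the weight `e^{Lp}` concentrates at `p = 0`, where the rest of the integrand is close to `1`.
Bounding `u^{-p-1} sinc(πp)` above by `u^{-2}` and below by `1 - π²p²/6`, and using
`∫₀¹ e^{Lp} dp = -u/L` and `∫₀¹ p² e^{Lp} dp ≤ 2/L²`, gives
`-1/u ≤ f₁(u) (1 - u) log (1 - u) ≤ -u - π²/(3L)`; both bounds tend to `-1`. -/

open intervalIntegral Filter Topology Set

namespace Real

lemma abs_one_sub_sinc_le (x : ℝ) : |1 - sinc x| ≤ x ^ 2 / 6 := by
  rcases eq_or_ne x 0 with rfl | hx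
  · simp [sinc_zero]
  have habs : 0 < |x| := abs_pos.2 hx
  calc |1 - sinc x| = |x - sin x| / |x| := by
        rw [sinc_of_ne_zero hx, ← abs_div, sub_div, div_self hx]
    _ ≤ |x| ^ 3 / 6 / |x| := by gcongr; exact abs_sub_sin_le x
    _ = x ^ 2 / 6 := by field_simp; rw [sq_abs]

lemma one_sub_sq_div_six_le_sinc (x : ℝ) : 1 - x ^ 2 / 6 ≤ sinc x := by
  linarith [(abs_le.1 (abs_one_sub_sinc_le x)).2]

lemma sinc_nonneg_of_mem_Icc {x : ℝ} (hx : x ∈ Icc 0 π) : 0 ≤ sinc x := by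
  rcases eq_or_ne x 0 with rfl | hx0
  · simp [sinc_zero]
  rw [sinc_of_ne_zero hx0]
  exact div_nonneg (sin_nonneg_of_nonneg_of_le_pi hx.1 hx.2) hx.1

lemma integral_exp_const_mul {L : ℝ} (hL : L ≠ 0) (b : ℝ) :
    ∫ p in (0:ℝ)..b, exp (L * p) = (exp (L * b) - 1) / L := by
  rw [integral_comp_mul_left (fun x => exp x) hL, integral_exp, mul_zero, exp_zero,
    smul_eq_mul, inv_mul_eq_div]

lemma sq_mul_exp_const_mul_le {L p : ℝ} (hL : L < 0) (hp : 0 ≤ p) :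
    p ^ 2 * exp (L * p) ≤ 2 / L ^ 2 := by
  have hLp : 0 ≤ -(L * p) := by nlinarith
  have hquad := quadratic_le_exp_of_nonneg hLp
  have hprod : exp (-(L * p)) * exp (L * p) = 1 := by rw [← exp_add, neg_add_cancel, exp_zero]
  rw [le_div_iff₀ (by nlinarith)]
  nlinarith [exp_pos (L * p)]

lemma integral_sq_mul_exp_const_mul_le {L : ℝ} (hL : L < 0) :
    ∫ p in (0:ℝ)..1, p ^ 2 * exp (L * p) ≤ 2 / L ^ 2 := by
  calc ∫ p in (0:ℝ)..1, p ^ 2 * exp (L * p) ≤ ∫ _ in (0:ℝ)..1, 2 / L ^ 2 :=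
        integral_mono_on zero_le_one ((by fun_prop : Continuous _).intervalIntegrable 0 1)
          intervalIntegrable_const
          fun p hp => sq_mul_exp_const_mul_le hL hp.1
    _ = 2 / L ^ 2 := by simp

end Real

lemma continuous_rpow_mul_exp_mul_sinc {u : ℝ} (hu : 0 < u) (L : ℝ) :
    Continuous fun p : ℝ => u ^ (-p - 1) * exp (L * p) * sinc (π * p) := by
  have := hu.ne'
  have := continuous_sinc
  fun_prop

-- `sin (π p) / (π p)` is `0` at `p = 0`; `sinc` changes only this null set and is continuous.
lemma f1_mul_one_sub {u : ℝ} (hu1 : u < 1) :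
    f1 u * (1 - u) = ∫ p in (0:ℝ)..1, u ^ (-p - 1) * exp (log (1 - u) * p) * sinc (π * p) := by
  have hε : 0 < 1 - u := sub_pos.2 hu1
  rw [f1, ← intervalIntegral.integral_mul_const]
  refine integral_congr_ae
    ((MeasureTheory.Measure.ae_ne MeasureTheory.volume 0).mono fun p hp _ => ?_)
  rw [sinc_of_ne_zero (mul_ne_zero pi_ne_zero hp), ← rpow_def_of_pos hε,
    rpow_sub hε, rpow_one]
  field_simp

section Bounds

variable {u L : ℝ} (hu0 : 0 < u) (hu1 : u ≤ 1)
include hu0 hu1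

lemma integral_rpow_mul_exp_mul_sinc_le (hL : L ≠ 0) :
    ∫ p in (0:ℝ)..1, u ^ (-p - 1) * exp (L * p) * sinc (π * p) ≤
      u ^ (-2:ℝ) * ((exp L - 1) / L) := by
  have hexp := integral_exp_const_mul hL 1
  rw [mul_one] at hexp
  rw [← hexp, ← integral_const_mul]
  refine integral_mono_on zero_le_one
    ((continuous_rpow_mul_exp_mul_sinc hu0 L).intervalIntegrable 0 1)
    ((by fun_prop : Continuous _).intervalIntegrable 0 1) fun p hp => ?_
  have hrpow : u ^ (-p - 1) ≤ u ^ (-2:ℝ) :=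
    rpow_le_rpow_of_exponent_ge hu0 hu1 (by linarith [hp.2])
  calc u ^ (-p - 1) * exp (L * p) * sinc (π * p) ≤ u ^ (-p - 1) * exp (L * p) * 1 := by
        gcongr; exact sinc_le_one _
    _ ≤ u ^ (-2:ℝ) * exp (L * p) := by rw [mul_one]; gcongr

lemma le_integral_rpow_mul_exp_mul_sinc (hL : L < 0) :
    (exp L - 1) / L - π ^ 2 / (3 * L ^ 2) ≤
      ∫ p in (0:ℝ)..1, u ^ (-p - 1) * exp (L * p) * sinc (π * p) := by
  have hint : ∫ p in (0:ℝ)..1, exp (L * p) * (1 - (π * p) ^ 2 / 6) =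
      (exp L - 1) / L - π ^ 2 / 6 * ∫ p in (0:ℝ)..1, p ^ 2 * exp (L * p) := by
    have hexp := integral_exp_const_mul hL.ne 1
    rw [mul_one] at hexp
    rw [← hexp, ← integral_const_mul, ← integral_sub
      ((by fun_prop : Continuous _).intervalIntegrable 0 1)
      ((by fun_prop : Continuous _).intervalIntegrable 0 1)]
    exact integral_congr fun p _ => by ring
  calc (exp L - 1) / L - π ^ 2 / (3 * L ^ 2)
      = (exp L - 1) / L - π ^ 2 / 6 * (2 / L ^ 2) := by ring
    _ ≤ (exp L - 1) / L - π ^ 2 / 6 * ∫ p in (0:ℝ)..1, p ^ 2 * exp (L * p) := by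
        gcongr; exact integral_sq_mul_exp_const_mul_le hL
    _ = ∫ p in (0:ℝ)..1, exp (L * p) * (1 - (π * p) ^ 2 / 6) := hint.symm
    _ ≤ ∫ p in (0:ℝ)..1, u ^ (-p - 1) * exp (L * p) * sinc (π * p) := by
        refine integral_mono_on zero_le_one ((by fun_prop : Continuous _).intervalIntegrable 0 1)
          ((continuous_rpow_mul_exp_mul_sinc hu0 L).intervalIntegrable 0 1) fun p hp => ?_
        have hsinc : 0 ≤ sinc (π * p) :=
          sinc_nonneg_of_mem_Icc ⟨by nlinarith [pi_pos, hp.1], by nlinarith [pi_pos, hp.2]⟩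
        have hrpow : 1 ≤ u ^ (-p - 1) :=
          one_le_rpow_of_pos_of_le_one_of_nonpos hu0 hu1 (by linarith [hp.1])
        calc exp (L * p) * (1 - (π * p) ^ 2 / 6) ≤ 1 * exp (L * p) * sinc (π * p) := by
              rw [one_mul]; gcongr; exact one_sub_sq_div_six_le_sinc _
          _ ≤ u ^ (-p - 1) * exp (L * p) * sinc (π * p) := by gcongr

end Bounds

lemma f1_mul_one_sub_mul_log_mem_Icc {u : ℝ} (hu0 : 0 < u) (hu1 : u < 1) :
    f1 u * (1 - u) * log (1 - u) ∈ Icc (-u⁻¹) (-u - π ^ 2 / 3 / log (1 - u)) := by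
  have hε : 0 < 1 - u := sub_pos.2 hu1
  set L := log (1 - u)
  have hL : L < 0 := log_neg hε (by linarith)
  have hL0 : L ≠ 0 := hL.ne
  have hexpL : exp L = 1 - u := exp_log hε
  have hu2 : u ^ (-2:ℝ) = (u ^ 2)⁻¹ := by rw [rpow_neg hu0.le, rpow_two]
  have hupper := integral_rpow_mul_exp_mul_sinc_le hu0 hu1.le hL0
  have hlower := le_integral_rpow_mul_exp_mul_sinc hu0 hu1.le hL
  rw [hexpL, hu2] at hupper
  rw [hexpL] at hlower
  rw [f1_mul_one_sub hu1]
  set I := ∫ p in (0:ℝ)..1, u ^ (-p - 1) * exp (L * p) * sinc (π * p)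
  constructor
  · calc -u⁻¹ = L * ((u ^ 2)⁻¹ * ((1 - u - 1) / L)) := by field_simp; ring
      _ ≤ I * L := by rw [mul_comm I]; exact mul_le_mul_of_nonpos_left hupper hL.le
  · calc I * L ≤ L * ((1 - u - 1) / L - π ^ 2 / (3 * L ^ 2)) := by
          rw [mul_comm I]; exact mul_le_mul_of_nonpos_left hlower hL.le
      _ = -u - π ^ 2 / 3 / L := by field_simp; ring

lemma tendsto_log_one_sub_nhdsLT_one : Tendsto (fun u : ℝ => log (1 - u)) (𝓝[<] 1) atBot := by
  refine tendsto_log_nhdsGT_zero.comp (tendsto_nhdsWithin_iff.2 ⟨?_, ?_⟩)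
  · have := ((continuous_sub_left (1:ℝ)).tendsto 1).mono_left (nhdsWithin_le_nhds (s := Iio 1))
    rwa [sub_self] at this
  · exact eventually_nhdsWithin_of_forall fun u hu => mem_Ioi.2 (sub_pos.2 hu)

theorem stmt8 :
    Filter.Tendsto (fun u : ℝ => f1 u * (1 - u) * Real.log (1 - u))
      (nhdsWithin 1 (Set.Iio 1)) (nhds (-1)) := by
  have hid : Tendsto (fun u : ℝ => u) (𝓝[<] 1) (𝓝 1) :=
    tendsto_nhdsWithin_of_tendsto_nhds tendsto_id
  have hlower : Tendsto (fun u : ℝ => -u⁻¹) (𝓝[<] 1) (𝓝 (-1)) := by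
    simpa using (hid.inv₀ one_ne_zero).neg
  have hupper : Tendsto (fun u : ℝ => -u - π ^ 2 / 3 / log (1 - u)) (𝓝[<] 1) (𝓝 (-1)) := by
    simpa using hid.neg.sub (tendsto_log_one_sub_nhdsLT_one.const_div_atBot (π ^ 2 / 3))
  refine tendsto_of_tendsto_of_tendsto_of_le_of_le' hlower hupper ?_ ?_ <;>
  filter_upwards [Ioo_mem_nhdsLT (zero_lt_one' ℝ)] with u hu
  exacts [(f1_mul_one_sub_mul_log_mem_Icc hu.1 hu.2).1,
    (f1_mul_one_sub_mul_log_mem_Icc hu.1 hu.2).2]
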